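/- Let X be an arithmetic L-space. The map y ↦ X \ ↓y is a bijection from min Y_d onto the set of maximal d-upsets of X; in particular, the maximal d-upsets of X are precisely the clopen upsets of the form X \ ↓y with y ∈ min Y_d. -/
import Mathlib


open Set Topology

variable {X : Type*} [TopologicalSpace X] [PartialOrder X]

/-- The downward closure `↓A` of a subset of a poset. -/
def dwC (A : Set X) : Set X := {x : X | ∃ a ∈ A, x ≤ a}

/-- The upward closure `↑A` of a subset of a poset. -/
def upC (A : Set X) : Set X := {x : X | ∃ a ∈ A, a ≤ x}

/-- The set of maximal points of a subset of a poset. -/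
def maxOf (A : Set X) : Set X := {x ∈ A | ∀ z ∈ A, x ≤ z → z = x}

/-- The set of minimal points of a subset of a poset. -/
def minOf (A : Set X) : Set X := {x ∈ A | ∀ z ∈ A, z ≤ x → z = x}

/-- A Priestley space: compact with the Priestley separation axiom. -/
def IsPriestley (X : Type*) [TopologicalSpace X] [PartialOrder X] : Prop :=
  CompactSpace X ∧
    ∀ x y : X, ¬x ≤ y → ∃ U : Set X, IsClopen U ∧ IsUpperSet U ∧ x ∈ U ∧ y ∉ U

/-- An L-space: a Priestley space where the closure of every open upset is an open upset. -/
def IsLSpace (X : Type*) [TopologicalSpace X] [PartialOrder X] : Prop :=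
  IsPriestley X ∧
    ∀ U : Set X, IsOpen U → IsUpperSet U → IsOpen (closure U) ∧ IsUpperSet (closure U)

/-- The set `Y` of localic points: those `y` with `↓y` clopen. -/
def localicPts (X : Type*) [TopologicalSpace X] [PartialOrder X] : Set X :=
  {y : X | IsClopen (dwC ({y} : Set X))}

/-- A Scott upset: a closed upset whose minimal points are localic. -/
def IsScottUp (F : Set X) : Prop :=
  IsClosed F ∧ IsUpperSet F ∧ minOf F ⊆ localicPts X

/-- The collection of clopen Scott upsets of `X`. -/
def ClopSUp (X : Type*) [TopologicalSpace X] [PartialOrder X] : Set (Set X) :=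
  {U : Set X | IsClopen U ∧ IsScottUp U}

/-- The core of a clopen upset: the union of the clopen Scott upsets inside it. -/
def coreC (U : Set X) : Set X := ⋃₀ {V : Set X | V ∈ ClopSUp X ∧ V ⊆ U}

/-- An algebraic L-space: the core of each clopen upset is dense in it. -/
def IsAlgebraicLSpace (X : Type*) [TopologicalSpace X] [PartialOrder X] : Prop :=
  IsLSpace X ∧ ∀ U : Set X, IsClopen U → IsUpperSet U → U ⊆ closure (coreC U)

/-- An arithmetic L-space: an algebraic L-space in which the intersection of any
two clopen Scott upsets is again a Scott upset. -/
def IsArithmeticLSpace (X : Type*) [TopologicalSpace X] [PartialOrder X] : Prop :=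
  IsAlgebraicLSpace X ∧
    ∀ U V : Set X, U ∈ ClopSUp X → V ∈ ClopSUp X → IsScottUp (U ∩ V)

/-- A nuclear subset of an L-space. -/
def IsNuclearSub (N : Set X) : Prop :=
  IsClosed N ∧ ∀ U : Set X, IsClopen U → IsClopen (dwC (U ∩ N))

/-- The nucleus `j_N` associated to a nuclear subset: `j_N U = X \ ↓(N \ U)`. -/
def jN (N U : Set X) : Set X := (dwC (N \ U))ᶜ

/-- A nuclear subset is inductive if `↑(F ∩ N)` is a Scott upset for every Scott upset `F`. -/
def IsInductiveNuclear (N : Set X) : Prop :=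
  ∀ F : Set X, IsScottUp F → IsScottUp (upC (F ∩ N))

/-- The pseudocomplement `V* = X \ ↓V`. -/
def starC (V : Set X) : Set X := (dwC V)ᶜ

/-- The `d`-nucleus on clopen upsets: `d U = cl ⋃ {V** : V ∈ ClopSUp X, V ⊆ U}`. -/
def dOp (U : Set X) : Set X :=
  closure (⋃₀ {W : Set X | ∃ V ∈ ClopSUp X, V ⊆ U ∧ W = starC (starC V)})

/-- The `d`-core: `core_d U = ⋃ {d V : V ∈ ClopSUp X, V ⊆ U}`. -/
def coreD (U : Set X) : Set X :=
  ⋃₀ {W : Set X | ∃ V ∈ ClopSUp X, V ⊆ U ∧ W = dOp V}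

/-- The topology on a subset `S ⊆ X` whose opens are (generated by) the traces of
clopen upsets of `X`. -/
def traceTop (S : Set X) : TopologicalSpace S :=
  TopologicalSpace.generateFrom
    {V : Set S | ∃ U : Set X, IsClopen U ∧ IsUpperSet U ∧ V = Subtype.val ⁻¹' U}

/-- A `d`-upset: a clopen upset `U` with `cl (core_d U) = U`. -/
def IsDUpset {X : Type*} [TopologicalSpace X] [PartialOrder X] (U : Set X) : Prop :=
  IsClopen U ∧ IsUpperSet U ∧ closure (coreD U) = U

/-- A maximal `d`-upset: a maximal element of the proper `d`-upsets ordered by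
inclusion. -/
def IsMaxDUpset {X : Type*} [TopologicalSpace X] [PartialOrder X] (U : Set X) : Prop :=
  IsDUpset U ∧ U ≠ Set.univ ∧
    ∀ V : Set X, IsDUpset V → V ≠ Set.univ → U ⊆ V → V = U

/-! ### Auxiliary lemmas for Statement 15 -/

section Statement15Aux

set_option linter.unusedSectionVars false
set_option linter.unusedVariables false

lemma st_mem_dwC_singleton {y x : X} : x ∈ dwC ({y} : Set X) ↔ x ≤ y := by
  simp [dwC]

lemma st_subset_dwC {A : Set X} : A ⊆ dwC A := fun a ha => ⟨a, ha, le_refl a⟩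

lemma st_dwC_mono {A B : Set X} (h : A ⊆ B) : dwC A ⊆ dwC B := by
  rintro x ⟨a, ha, hxa⟩; exact ⟨a, h ha, hxa⟩

lemma st_isLowerSet_dwC (A : Set X) : IsLowerSet (dwC A) := by
  rintro a b hba ⟨c, hc, hac⟩; exact ⟨c, hc, hba.trans hac⟩

lemma st_dwC_empty : dwC (∅ : Set X) = ∅ := by
  ext x; simp [dwC]

lemma st_isUpperSet_jN (N U : Set X) : IsUpperSet (jN N U) :=
  (st_isLowerSet_dwC (N \ U)).compl

lemma st_isClopen_jN {N : Set X} (hN : IsNuclearSub N) {U : Set X} (hU : IsClopen U) :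
    IsClopen (jN N U) := by
  have h := hN.2 Uᶜ hU.compl
  have he : N \ U = Uᶜ ∩ N := by
    ext x; simp [Set.mem_diff, Set.mem_inter_iff, and_comm]
  rw [jN, he]
  exact h.compl

lemma st_subset_jN {N U : Set X} (hU : IsUpperSet U) : U ⊆ jN N U := by
  intro x hx hmem
  obtain ⟨a, haNU, hxa⟩ := hmem
  exact haNU.2 (hU hxa hx)

lemma st_jN_mono {N U V : Set X} (h : U ⊆ V) : jN N U ⊆ jN N V := by
  apply compl_subset_compl.mpr
  apply st_dwC_mono
  rintro a ⟨h1, h2⟩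
  exact ⟨h1, fun hU => h2 (h hU)⟩

lemma st_notMem_jN {N U : Set X} {n : X} (hn : n ∈ N) (hnU : n ∉ U) : n ∉ jN N U := by
  intro h
  exact h ⟨n, ⟨hn, hnU⟩, le_refl n⟩

lemma st_jN_idem {N U : Set X} : jN N (jN N U) = jN N U := by
  unfold jN
  congr 1
  apply subset_antisymm
  · rintro x ⟨a, ⟨haN, haJ⟩, hxa⟩
    have ha : a ∈ dwC (N \ U) := not_not.mp haJ
    obtain ⟨b, hb, hab⟩ := ha
    exact ⟨b, hb, hxa.trans hab⟩
  · rintro x ⟨a, ⟨haN, haU⟩, hxa⟩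
    exact ⟨a, ⟨haN, st_notMem_jN haN haU⟩, hxa⟩

lemma st_upper_subset_jN_iff {N U T : Set X} (hT : IsUpperSet T) :
    T ⊆ jN N U ↔ T ∩ N ⊆ U := by
  constructor
  · intro h x hx
    by_contra hxU
    exact (h hx.1) ⟨x, ⟨hx.2, hxU⟩, le_refl x⟩
  · intro h x hxT hmem
    obtain ⟨a, ⟨haN, haU⟩, hxa⟩ := hmem
    exact haU (h ⟨hT hxa hxT, haN⟩)

lemma st_subset_starC2 {V : Set X} (hV : IsUpperSet V) : V ⊆ starC (starC V) := by
  intro x hx hmem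
  obtain ⟨a, ha, hxa⟩ := hmem
  exact ha (st_subset_dwC (hV hxa hx))

lemma st_dOp_mono {U V : Set X} (h : U ⊆ V) : dOp U ⊆ dOp V := by
  apply closure_mono
  apply Set.sUnion_mono
  rintro W ⟨V', hV', hV'U, rfl⟩
  exact ⟨V', hV', hV'U.trans h, rfl⟩

lemma st_starC2_subset_dOp {V : Set X} (hV : V ∈ ClopSUp X) : starC (starC V) ⊆ dOp V := by
  refine Set.Subset.trans ?_ subset_closure
  apply Set.subset_sUnion_of_mem
  exact ⟨V, hV, subset_rfl, rfl⟩

lemma st_subset_dOp {V : Set X} (hV : V ∈ ClopSUp X) : V ⊆ dOp V :=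
  (st_subset_starC2 hV.2.2.1).trans (st_starC2_subset_dOp hV)

lemma st_closure_coreD (U : Set X) : closure (coreD U) = dOp U := by
  apply subset_antisymm
  · apply closure_minimal _ isClosed_closure
    rintro x ⟨W, ⟨V, hV, hVU, rfl⟩, hxW⟩
    exact st_dOp_mono hVU hxW
  · apply closure_mono
    rintro x ⟨W, ⟨V, hV, hVU, rfl⟩, hxW⟩
    exact ⟨dOp V, ⟨V, hV, hVU, rfl⟩, st_starC2_subset_dOp hV hxW⟩

lemma st_dUpset_fixed {N : Set X}
    (hNd : ∀ U : Set X, IsClopen U → IsUpperSet U → jN N U = dOp U)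
    {U : Set X} (h : IsDUpset U) : jN N U = U := by
  rw [hNd U h.1 h.2.1, ← st_closure_coreD]
  exact h.2.2

lemma st_isDUpset_of_fixed {N : Set X}
    (hNd : ∀ U : Set X, IsClopen U → IsUpperSet U → jN N U = dOp U)
    {U : Set X} (hc : IsClopen U) (hu : IsUpperSet U) (hfix : jN N U = U) : IsDUpset U :=
  ⟨hc, hu, by rw [st_closure_coreD, ← hNd U hc hu]; exact hfix⟩

lemma st_isDUpset_jN {N : Set X} (hN : IsNuclearSub N)
    (hNd : ∀ U : Set X, IsClopen U → IsUpperSet U → jN N U = dOp U)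
    {U : Set X} (hUc : IsClopen U) (hUu : IsUpperSet U) : IsDUpset (jN N U) :=
  st_isDUpset_of_fixed hNd (st_isClopen_jN hN hUc) (st_isUpperSet_jN N U) st_jN_idem

lemma st_isClosed_upClo (hP : IsPriestley X) (z : X) : IsClosed {x : X | z ≤ x} := by
  have he : {x : X | z ≤ x} = ⋂₀ {U : Set X | (IsClopen U ∧ IsUpperSet U) ∧ z ∈ U} := by
    apply subset_antisymm
    · intro x hx
      rw [Set.mem_sInter]
      rintro U ⟨⟨_, hUu⟩, hzU⟩
      exact hUu hx hzU
    · intro x hx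
      by_contra hzx
      obtain ⟨U, hUc, hUu, hzU, hxU⟩ := hP.2 z x hzx
      exact hxU (Set.mem_sInter.mp hx U ⟨⟨hUc, hUu⟩, hzU⟩)
  rw [he]
  exact isClosed_sInter (fun U hU => hU.1.1.isClosed)

lemma st_isClosed_dwC_singleton (hP : IsPriestley X) (z : X) :
    IsClosed (dwC ({z} : Set X)) := by
  have h1 : dwC ({z} : Set X) = {x : X | x ≤ z} := by
    ext x; simp [dwC]
  have he : {x : X | x ≤ z} =
      ⋂₀ {W : Set X | ∃ U : Set X, IsClopen U ∧ IsUpperSet U ∧ z ∉ U ∧ W = Uᶜ} := by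
    apply subset_antisymm
    · intro x hx
      rw [Set.mem_sInter]
      rintro W ⟨U, hUc, hUu, hzU, rfl⟩
      intro hxU
      exact hzU (hUu hx hxU)
    · intro x hx
      by_contra hxz
      obtain ⟨U, hUc, hUu, hxU, hzU⟩ := hP.2 x z hxz
      exact (Set.mem_sInter.mp hx Uᶜ ⟨U, hUc, hUu, hzU, rfl⟩) hxU
  rw [h1, he]
  apply isClosed_sInter
  rintro W ⟨U, hUc, _, _, rfl⟩
  exact hUc.compl.isClosed

lemma st_exists_maxOf_above (hcomp : CompactSpace X) (hP : IsPriestley X)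
    {F : Set X} (hF : IsClosed F) {x : X} (hx : x ∈ F) :
    ∃ m ∈ maxOf F, x ≤ m := by
  have key : ∀ c ⊆ F, IsChain (· ≤ ·) c → ∀ y ∈ c, ∃ ub ∈ F, ∀ z ∈ c, z ≤ ub := by
    intro c hcF hchain y hy
    haveI : Nonempty c := ⟨⟨y, hy⟩⟩
    have hdir : Directed (· ⊇ ·) (fun z : c => F ∩ {x : X | (z : X) ≤ x}) := by
      intro a b
      rcases hchain.total a.2 b.2 with h | h
      · exact ⟨b, fun w hw => ⟨hw.1, h.trans hw.2⟩, fun w hw => hw⟩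
      · exact ⟨a, fun w hw => hw, fun w hw => ⟨hw.1, h.trans hw.2⟩⟩
    have hne : ∀ z : c, (F ∩ {x : X | (z : X) ≤ x}).Nonempty :=
      fun z => ⟨z, hcF z.2, le_refl _⟩
    have hcl : ∀ z : c, IsClosed (F ∩ {x : X | (z : X) ≤ x}) :=
      fun z => hF.inter (st_isClosed_upClo hP _)
    obtain ⟨ub, hub⟩ := IsCompact.nonempty_iInter_of_directed_nonempty_isCompact_isClosed
      _ hdir hne (fun z => (hcl z).isCompact) hcl
    rw [Set.mem_iInter] at hub
    exact ⟨ub, (hub ⟨y, hy⟩).1, fun z hz => (hub ⟨z, hz⟩).2⟩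
  obtain ⟨m, hxm, hmax⟩ := zorn_le_nonempty₀ F key x hx
  exact ⟨m, ⟨hmax.1, fun z hz hmz => le_antisymm (hmax.2 hz hmz) hmz⟩, hxm⟩

lemma st_exists_minOf_below (hcomp : CompactSpace X) (hP : IsPriestley X)
    {F : Set X} (hF : IsClosed F) {x : X} (hx : x ∈ F) :
    ∃ m ∈ minOf F, m ≤ x := by
  let G : Set Xᵒᵈ := OrderDual.ofDual ⁻¹' F
  have key : ∀ c ⊆ G, IsChain (· ≤ ·) c → ∀ y ∈ c, ∃ ub ∈ G, ∀ z ∈ c, z ≤ ub := by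
    intro c hcF hchain y hy
    haveI : Nonempty c := ⟨⟨y, hy⟩⟩
    have hdir : Directed (· ⊇ ·)
        (fun z : c => F ∩ dwC ({OrderDual.ofDual (z : Xᵒᵈ)} : Set X)) := by
      intro a b
      rcases hchain.total a.2 b.2 with h | h
      · have h' : OrderDual.ofDual (b : Xᵒᵈ) ≤ OrderDual.ofDual (a : Xᵒᵈ) := h
        exact ⟨b, fun w hw =>
          ⟨hw.1, st_mem_dwC_singleton.mpr ((st_mem_dwC_singleton.mp hw.2).trans h')⟩,
          fun w hw => hw⟩
      · have h' : OrderDual.ofDual (a : Xᵒᵈ) ≤ OrderDual.ofDual (b : Xᵒᵈ) := h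
        exact ⟨a, fun w hw => hw, fun w hw =>
          ⟨hw.1, st_mem_dwC_singleton.mpr ((st_mem_dwC_singleton.mp hw.2).trans h')⟩⟩
    have hne : ∀ z : c, (F ∩ dwC ({OrderDual.ofDual (z : Xᵒᵈ)} : Set X)).Nonempty :=
      fun z => ⟨OrderDual.ofDual (z : Xᵒᵈ), hcF z.2, st_subset_dwC rfl⟩
    have hcl : ∀ z : c, IsClosed (F ∩ dwC ({OrderDual.ofDual (z : Xᵒᵈ)} : Set X)) :=
      fun z => hF.inter (st_isClosed_dwC_singleton hP _)
    obtain ⟨lb, hlb⟩ := IsCompact.nonempty_iInter_of_directed_nonempty_isCompact_isClosed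
      _ hdir hne (fun z => (hcl z).isCompact) hcl
    rw [Set.mem_iInter] at hlb
    refine ⟨OrderDual.toDual lb, (hlb ⟨y, hy⟩).1, fun z hz => ?_⟩
    exact (st_mem_dwC_singleton.mp (hlb ⟨z, hz⟩).2 :
      lb ≤ OrderDual.ofDual (z : Xᵒᵈ))
  obtain ⟨m, hxm, hmax⟩ := zorn_le_nonempty₀ (α := Xᵒᵈ) G key (OrderDual.toDual x) hx
  refine ⟨OrderDual.ofDual m, ⟨hmax.1, ?_⟩, (hxm : OrderDual.ofDual m ≤ x)⟩
  intro z hz hzm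
  have h2 := hmax.2 (show OrderDual.toDual z ∈ G from hz)
    (show m ≤ OrderDual.toDual z from hzm)
  exact le_antisymm hzm (h2 : OrderDual.ofDual m ≤ z)

end Statement15Aux

section Statement15Aux2

set_option linter.unusedSectionVars false
set_option linter.unusedVariables false

/-- Clopen Scott upsets are "compact": if one is contained in the closure of a directed
union of open upsets, it is contained in one of them. -/
lemma st_cpt (hcomp : CompactSpace X) (hP : IsPriestley X)
    {V : Set X} (hV : V ∈ ClopSUp X) {c : Set (Set X)} (hcne : c.Nonempty)
    (hopen : ∀ A ∈ c, IsOpen A) (hup : ∀ A ∈ c, IsUpperSet A)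
    (hdir : DirectedOn (· ⊆ ·) c) (hsub : V ⊆ closure (⋃₀ c)) :
    ∃ A ∈ c, V ⊆ A := by
  have hcov : V ⊆ ⋃₀ c := by
    intro w hw
    have hFcl : IsClosed (V ∩ dwC ({w} : Set X)) :=
      hV.1.isClosed.inter (st_isClosed_dwC_singleton hP w)
    have hwF : w ∈ V ∩ dwC ({w} : Set X) := ⟨hw, st_subset_dwC rfl⟩
    obtain ⟨m, hm, hmw⟩ := st_exists_minOf_below hcomp hP hFcl hwF
    have hmV : m ∈ minOf V := by
      refine ⟨hm.1.1, ?_⟩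
      intro z hz hzm
      exact hm.2 z ⟨hz, st_mem_dwC_singleton.mpr (hzm.trans hmw)⟩ hzm
    have hmY : IsClopen (dwC ({m} : Set X)) := hV.2.2.2 hmV
    have hmcl : m ∈ closure (⋃₀ c) := hsub hm.1.1
    rw [mem_closure_iff] at hmcl
    obtain ⟨v, hv⟩ := hmcl (dwC ({m} : Set X)) hmY.isOpen (st_subset_dwC rfl)
    obtain ⟨A, hA, hvA⟩ := hv.2
    have hmA : m ∈ A := hup A hA (st_mem_dwC_singleton.mp hv.1) hvA
    exact Set.mem_sUnion.mpr ⟨A, hA, hup A hA hmw hmA⟩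
  haveI : Nonempty c := Set.Nonempty.to_subtype hcne
  have hVcpt : IsCompact V := hV.1.isClosed.isCompact
  have hcov' : V ⊆ ⋃ (A : c), (A : Set X) := by rwa [← Set.sUnion_eq_iUnion]
  obtain ⟨A, hVA⟩ := hVcpt.elim_directed_cover (fun A : c => (A : Set X))
    (fun A => hopen A A.2) hcov' (directedOn_iff_directed.mp hdir)
  exact ⟨A, A.2, hVA⟩

/-- `(↓z)ᶜ` is a d-upset for localic `z ∈ N`. -/
lemma st_isDUpset_compl_dwC {N : Set X}
    (hNd : ∀ U : Set X, IsClopen U → IsUpperSet U → jN N U = dOp U)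
    {z : X} (hzN : z ∈ N) (hzY : z ∈ localicPts X) :
    IsDUpset (dwC ({z} : Set X))ᶜ := by
  have hzY' : IsClopen (dwC ({z} : Set X)) := hzY
  have hc : IsClopen (dwC ({z} : Set X))ᶜ := hzY'.compl
  have hu : IsUpperSet (dwC ({z} : Set X))ᶜ := (st_isLowerSet_dwC _).compl
  refine st_isDUpset_of_fixed hNd hc hu ?_
  unfold jN
  congr 1
  apply subset_antisymm
  · rintro x ⟨a, ⟨haN, haD⟩, hxa⟩
    have ha : a ∈ dwC ({z} : Set X) := not_not.mp haD
    exact st_mem_dwC_singleton.mpr (hxa.trans (st_mem_dwC_singleton.mp ha))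
  · intro x hx
    exact ⟨z, ⟨hzN, not_not_intro (st_subset_dwC rfl)⟩, st_mem_dwC_singleton.mp hx⟩

lemma st_compl_dwC_ne_univ (z : X) : (dwC ({z} : Set X))ᶜ ≠ Set.univ := by
  intro h
  have hz : z ∈ (dwC ({z} : Set X))ᶜ := h ▸ Set.mem_univ z
  exact hz (st_subset_dwC rfl)

/-- There is a clopen Scott upset whose `jN`-image is not inside a given proper clopen set. -/
lemma st_exists_K (hX : IsArithmeticLSpace X) {N : Set X}
    (hNd : ∀ U : Set X, IsClopen U → IsUpperSet U → jN N U = dOp U)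
    {V : Set X} (hVc : IsClopen V) (hVne : V ≠ Set.univ) :
    ∃ V₀ ∈ ClopSUp X, ¬ jN N V₀ ⊆ V := by
  by_contra h
  push_neg at h
  have h0 : (Set.univ : Set X) ⊆ closure (coreC Set.univ) :=
    hX.1.2 Set.univ isClopen_univ isUpperSet_univ
  have hsub : coreC (Set.univ : Set X) ⊆ V := by
    rintro x ⟨V', ⟨hV', _⟩, hxV'⟩
    have h1 : V' ⊆ jN N V' := by
      rw [hNd V' hV'.1 hV'.2.2.1]
      exact st_subset_dOp hV'
    exact h V' hV' (h1 hxV')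
  have h2 : (Set.univ : Set X) ⊆ V :=
    h0.trans ((closure_mono hsub).trans hVc.isClosed.closure_subset)
  exact hVne (Set.eq_univ_of_univ_subset h2)

/-- The closure of a directed union of d-upsets is a d-upset. -/
lemma st_isDUpset_closure_sUnion (hX : IsArithmeticLSpace X) {N : Set X}
    (hN : IsNuclearSub N)
    (hNd : ∀ U : Set X, IsClopen U → IsUpperSet U → jN N U = dOp U)
    {c : Set (Set X)} (hcne : c.Nonempty)
    (hdup : ∀ A ∈ c, IsDUpset A) (hdir : DirectedOn (· ⊆ ·) c) :
    IsDUpset (closure (⋃₀ c)) := by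
  haveI hcomp : CompactSpace X := hX.1.1.1.1
  have hP : IsPriestley X := hX.1.1.1
  have hopen : IsOpen (⋃₀ c) := isOpen_sUnion (fun A hA => (hdup A hA).1.isOpen)
  have hupset : IsUpperSet (⋃₀ c) := isUpperSet_sUnion (fun A hA => (hdup A hA).2.1)
  obtain ⟨ho, hu⟩ := hX.1.1.2 (⋃₀ c) hopen hupset
  have hcl : IsClopen (closure (⋃₀ c)) := ⟨isClosed_closure, ho⟩
  refine st_isDUpset_of_fixed hNd hcl hu ?_
  apply subset_antisymm
  · rw [hNd _ hcl hu]
    apply closure_minimal _ isClosed_closure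
    rintro x ⟨W, ⟨V', hV', hV'A, rfl⟩, hxW⟩
    obtain ⟨A, hAc, hV'A2⟩ := st_cpt hcomp hP hV' hcne
      (fun A hA => (hdup A hA).1.isOpen) (fun A hA => (hdup A hA).2.1) hdir hV'A
    have hAfix : dOp A = A := by
      rw [← st_closure_coreD]
      exact (hdup A hAc).2.2
    have h1 : starC (starC V') ⊆ A := by
      refine ((st_starC2_subset_dOp hV').trans ?_)
      rw [← hAfix]
      exact st_dOp_mono hV'A2
    exact subset_closure (Set.mem_sUnion.mpr ⟨A, hAc, h1 hxW⟩)
  · exact st_subset_jN hu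

end Statement15Aux2

section Statement15Aux3

set_option linter.unusedSectionVars false
set_option linter.unusedVariables false

/-- Key lemma: if `M` is a d-upset such that every strictly larger d-upset contains a
fixed upset `K ⊄ M`, then `Mᶜ = ↓n₀` for a localic point `n₀ ∈ N`. -/
lemma st_compl_eq_dwC_of_relmax (hX : IsArithmeticLSpace X) {N : Set X}
    (hN : IsNuclearSub N)
    (hNd : ∀ U : Set X, IsClopen U → IsUpperSet U → jN N U = dOp U)
    {M K : Set X} (hM : IsDUpset M) (hK : IsUpperSet K) (hKM : ¬ K ⊆ M)
    (hrel : ∀ A : Set X, IsDUpset A → M ⊆ A → A ≠ M → K ⊆ A) :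
    ∃ n₀ : X, n₀ ∈ N ∧ n₀ ∈ localicPts X ∧ Mᶜ = dwC ({n₀} : Set X) := by
  haveI hcomp : CompactSpace X := hX.1.1.1.1
  have hP : IsPriestley X := hX.1.1.1
  have hMfix : jN N M = M := st_dUpset_fixed hNd hM
  have hMne : M ≠ Set.univ := fun h => hKM (h ▸ Set.subset_univ K)
  have hcompl : Mᶜ = dwC (N \ M) := by
    conv_lhs => rw [← hMfix]
    simp only [jN, compl_compl]
  have hFcl : IsClosed (N \ M) := by
    rw [Set.diff_eq]
    exact hN.1.inter hM.1.compl.isClosed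
  have hNM : (N \ M).Nonempty := by
    rcases Set.eq_empty_or_nonempty (N \ M) with h | h
    · exfalso
      apply hMne
      have h1 : Mᶜ = ∅ := by rw [hcompl, h, st_dwC_empty]
      rw [← compl_compl M, h1, Set.compl_empty]
    · exact h
  -- the pair trick: any two distinct maximal points of N \ M force "the other" out of K
  have hpair : ∀ m ∈ maxOf (N \ M), ∀ n ∈ maxOf (N \ M), m ≠ n → n ∉ K := by
    intro m hm n hn hmn
    have hmlen : ¬ m ≤ n := fun h => hmn (hm.2 n hn.1 h).symm
    obtain ⟨W, hWc, hWu, hmW, hnW⟩ := hP.2 m n hmlen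
    have hGc : IsClopen (M ∪ W) := hM.1.union hWc
    have hGu : IsUpperSet (M ∪ W) := hM.2.1.union hWu
    have hAdup : IsDUpset (jN N (M ∪ W)) := st_isDUpset_jN hN hNd hGc hGu
    have hMA : M ⊆ jN N (M ∪ W) := Set.subset_union_left.trans (st_subset_jN hGu)
    have hmA : m ∈ jN N (M ∪ W) := st_subset_jN hGu (Or.inr hmW)
    have hAneM : jN N (M ∪ W) ≠ M := fun h => hm.1.2 (h ▸ hmA)
    have hKA : K ⊆ jN N (M ∪ W) := hrel _ hAdup hMA hAneM
    have hnA : n ∉ jN N (M ∪ W) := by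
      apply st_notMem_jN hn.1.1
      rintro (h | h)
      · exact hn.1.2 h
      · exact hnW h
    exact fun hnK => hnA (hKA hnK)
  -- uniqueness of the maximal point
  have huniq : ∀ m ∈ maxOf (N \ M), ∀ n ∈ maxOf (N \ M), m = n := by
    by_contra h
    push_neg at h
    obtain ⟨m, hm, n, hn, hmn⟩ := h
    have hallK : ∀ p ∈ maxOf (N \ M), p ∉ K := by
      intro p hp
      by_cases hpm : p = m
      · subst hpm
        exact hpair n hn p hp (fun he => hmn he.symm)
      · exact hpair m hm p hp (fun he => hpm he.symm)
    have hNKM : N ∩ K ⊆ M := by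
      rintro x ⟨hxN, hxK⟩
      by_contra hxM
      obtain ⟨p, hp, hxp⟩ := st_exists_maxOf_above hcomp hP hFcl ⟨hxN, hxM⟩
      exact hallK p hp (hK hxp hxK)
    have hKjN : K ⊆ jN N M :=
      (st_upper_subset_jN_iff hK).mpr (fun x hx => hNKM ⟨hx.2, hx.1⟩)
    rw [hMfix] at hKjN
    exact hKM hKjN
  obtain ⟨x₀, hx₀⟩ := hNM
  obtain ⟨n₀, hn₀, _⟩ := st_exists_maxOf_above hcomp hP hFcl hx₀
  have hMc : Mᶜ = dwC ({n₀} : Set X) := by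
    apply subset_antisymm
    · rw [hcompl]
      rintro x ⟨a, ha, hxa⟩
      obtain ⟨p, hp, hap⟩ := st_exists_maxOf_above hcomp hP hFcl ha
      have hpn : p = n₀ := huniq p hp n₀ hn₀
      exact st_mem_dwC_singleton.mpr (hxa.trans (hpn ▸ hap))
    · intro x hx
      rw [hcompl]
      exact ⟨n₀, hn₀.1, st_mem_dwC_singleton.mp hx⟩
  refine ⟨n₀, hn₀.1.1, ?_, hMc⟩
  show IsClopen (dwC ({n₀} : Set X))
  rw [← hMc]
  exact hM.1.compl

end Statement15Aux3

/-- Let `X` be an arithmetic L-space and `N = N_d` the nuclear subset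
whose nucleus `j_N` is the `d`-nucleus, with `Y_d = N_d ∩ Y`. The map `y ↦ X \ ↓y` is a
bijection from `min Y_d` onto the set of maximal `d`-upsets of `X`. -/
theorem statement15 (hX : IsArithmeticLSpace X)
    (N : Set X) (hN : IsNuclearSub N)
    (hNd : ∀ U : Set X, IsClopen U → IsUpperSet U → jN N U = dOp U) :
    Set.BijOn (fun y : X => (dwC ({y} : Set X))ᶜ)
      (minOf (N ∩ localicPts X)) {U : Set X | IsMaxDUpset U} := by
  haveI hcomp : CompactSpace X := hX.1.1.1.1
  have hP : IsPriestley X := hX.1.1.1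
  refine ⟨?_, ?_, ?_⟩
  · -- MapsTo
    intro y hy
    have hyN : y ∈ N := hy.1.1
    have hyY : y ∈ localicPts X := hy.1.2
    have hDup : IsDUpset (dwC ({y} : Set X))ᶜ := st_isDUpset_compl_dwC hNd hyN hyY
    refine ⟨hDup, st_compl_dwC_ne_univ y, ?_⟩
    intro V hV hVne hsubV
    by_cases hyV : y ∈ V
    · exfalso
      obtain ⟨V₀, hV₀, hKV⟩ := st_exists_K hX hNd hV.1 hVne
      have hKu : IsUpperSet (jN N V₀) := st_isUpperSet_jN N V₀
      -- Zorn on d-upsets between V and the "compact anchor" K := jN N V₀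
      have hZorn : ∀ c ⊆ {A : Set X | IsDUpset A ∧ V ⊆ A ∧ ¬ jN N V₀ ⊆ A},
          IsChain (· ⊆ ·) c → c.Nonempty →
          ∃ ub ∈ {A : Set X | IsDUpset A ∧ V ⊆ A ∧ ¬ jN N V₀ ⊆ A},
            ∀ s ∈ c, s ⊆ ub := by
        intro c hcZ hchain hcne
        have hdup : ∀ A ∈ c, IsDUpset A := fun A hA => (hcZ hA).1
        have hdir : DirectedOn (· ⊆ ·) c := hchain.directedOn
        refine ⟨closure (⋃₀ c),
          ⟨st_isDUpset_closure_sUnion hX hN hNd hcne hdup hdir, ?_, ?_⟩,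
          fun A hA => (Set.subset_sUnion_of_mem hA).trans subset_closure⟩
        · obtain ⟨A₀, hA₀⟩ := hcne
          exact (hcZ hA₀).2.1.trans
            ((Set.subset_sUnion_of_mem hA₀).trans subset_closure)
        · intro hKc
          have hV₀K : V₀ ⊆ jN N V₀ := by
            rw [hNd V₀ hV₀.1 hV₀.2.2.1]
            exact st_subset_dOp hV₀
          obtain ⟨A, hAc, hV₀A⟩ := st_cpt hcomp hP hV₀ hcne
            (fun A hA => (hdup A hA).1.isOpen) (fun A hA => (hdup A hA).2.1)
            hdir (hV₀K.trans hKc)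
          have hAfix : jN N A = A := st_dUpset_fixed hNd (hdup A hAc)
          have : jN N V₀ ⊆ A := by
            rw [← hAfix]
            exact st_jN_mono hV₀A
          exact (hcZ hAc).2.2 this
      obtain ⟨M, hVM, hMmax⟩ := zorn_subset_nonempty
        {A : Set X | IsDUpset A ∧ V ⊆ A ∧ ¬ jN N V₀ ⊆ A} hZorn V ⟨hV, subset_rfl, hKV⟩
      have hMZ := hMmax.1
      obtain ⟨n₀, hn₀N, hn₀Y, hn₀M⟩ := st_compl_eq_dwC_of_relmax hX hN hNd hMZ.1
        hKu hMZ.2.2 (fun A hAd hMA hAne => by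
          by_contra hKA
          exact hAne (subset_antisymm
            (hMmax.2 ⟨hAd, hMZ.2.1.trans hMA, hKA⟩ hMA) hMA))
      have hMcy : Mᶜ ⊆ dwC ({y} : Set X) :=
        compl_subset_comm.mp (hsubV.trans hVM)
      have hn₀Mc : n₀ ∈ Mᶜ := by
        rw [hn₀M]; exact st_subset_dwC rfl
      have hn₀y : n₀ ≤ y := st_mem_dwC_singleton.mp (hMcy hn₀Mc)
      have hn₀ne : n₀ ≠ y := by
        intro h
        exact hn₀Mc (by rw [h]; exact hVM hyV)
      exact hn₀ne (hy.2 n₀ ⟨hn₀N, hn₀Y⟩ hn₀y)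
    · -- y ∉ V : then V = (↓y)ᶜ
      apply subset_antisymm
      · intro x hxV hxD
        exact hyV (hV.2.1 (st_mem_dwC_singleton.mp hxD) hxV)
      · exact hsubV
  · -- InjOn
    intro y₁ h₁ y₂ h₂ he
    have he' : (dwC ({y₁} : Set X))ᶜ = (dwC ({y₂} : Set X))ᶜ := he
    have hd : dwC ({y₁} : Set X) = dwC ({y₂} : Set X) := by
      rw [← compl_compl (dwC ({y₁} : Set X)), he', compl_compl]
    have h12 : y₁ ≤ y₂ := by
      have : y₁ ∈ dwC ({y₂} : Set X) := by rw [← hd]; exact st_subset_dwC rfl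
      exact st_mem_dwC_singleton.mp this
    have h21 : y₂ ≤ y₁ := by
      have : y₂ ∈ dwC ({y₁} : Set X) := by rw [hd]; exact st_subset_dwC rfl
      exact st_mem_dwC_singleton.mp this
    exact le_antisymm h12 h21
  · -- SurjOn
    intro U hU
    have hUd : IsDUpset U := hU.1
    have hUne : U ≠ Set.univ := hU.2.1
    have hUmax := hU.2.2
    obtain ⟨n₀, hn₀N, hn₀Y, hn₀U⟩ := st_compl_eq_dwC_of_relmax hX hN hNd hUd
      isUpperSet_univ (fun h => hUne (Set.eq_univ_of_univ_subset h))
      (fun A hAd hUA hAne => by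
        by_contra h
        have hAuniv : A ≠ Set.univ := fun he => h (he ▸ subset_rfl)
        exact hAne (hUmax A hAd hAuniv hUA))
    refine ⟨n₀, ⟨⟨hn₀N, hn₀Y⟩, ?_⟩, ?_⟩
    · -- minimality of n₀ in N ∩ Y
      intro z hz hzn
      have hd := st_isDUpset_compl_dwC hNd hz.1 hz.2
      have hsub : U ⊆ (dwC ({z} : Set X))ᶜ := by
        have h1 : dwC ({z} : Set X) ⊆ dwC ({n₀} : Set X) := by
          intro x hx
          exact st_mem_dwC_singleton.mpr ((st_mem_dwC_singleton.mp hx).trans hzn)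
        rw [← hn₀U] at h1
        exact Set.subset_compl_comm.mp h1
      have he := hUmax _ hd (st_compl_dwC_ne_univ z) hsub
      have h2 : dwC ({z} : Set X) = dwC ({n₀} : Set X) := by
        rw [← hn₀U, ← he, compl_compl]
      have h3 : n₀ ∈ dwC ({z} : Set X) := by
        rw [h2]; exact st_subset_dwC rfl
      exact le_antisymm hzn (st_mem_dwC_singleton.mp h3)
    · show (dwC ({n₀} : Set X))ᶜ = U
      rw [← hn₀U, compl_compl]
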